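/- There is an absolute constant $C$ such that for all $l \geq 1$ and $x, y \geq 2$, the number of integers $n$ with $x < n \leq x + y$ and $H(n) \geq l$ is at most $C\left( \dfrac{y}{2\uparrow\uparrow l} + 2\uparrow\uparrow(l-1) \dfrac{(x+y)^{1/(2\uparrow\uparrow(l-1))}}{\log(x+y)} \right)$. -/

import Mathlib

/-!
If `H n > k`, then `p ^ r ∣ n` for a prime `p` and an exponent `r` with `H r ≥ k`, and any such
exponent satisfies `r ≥ T := 2↑↑k`. Counting the multiples of each such `p ^ r ≤ x + y` in the
interval bounds the count by `y ∑ p⁻ʳ + #{(p, r)}`. The sum is a tail `∑_{r ≥ T} (ζ(r) - 1)` with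
`ζ(r) - 1 ≪ 2⁻ʳ`, hence `≪ y / 2↑↑(k+1)`. Among the pairs, those with `r < 2T` have
`p ≤ A := (x + y)^{1/T}`, giving `π(A)` bases and, by the same density bound at scale `2T`,
`O(1)` exponents; those with `r ≥ 2T` have `p ≤ √A` and `O(log A)` exponents, and
`√A log A ≪ A / log A`.
-/

private lemma factorization_lt {n p : ℕ} (hp : p ∈ n.primeFactors) :
    n.factorization p < n := by
  obtain ⟨hprime, hdvd, hn⟩ := Nat.mem_primeFactors.mp hp
  calc n.factorization p < 2 ^ n.factorization p := (by first | exact Nat.lt_two_pow_self | exact Nat.lt_two_pow_self _)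
    _ ≤ p ^ n.factorization p := Nat.pow_le_pow_left hprime.two_le _
    _ ≤ n := Nat.le_of_dvd (Nat.pos_of_ne_zero hn) (Nat.ordProj_dvd n p)

/-- `towerH n` is the height of the prime-tower tree of `n`:
`H(1) = 0` and `H(n) = 1 + max_{p ∣ n} H(ν_p(n))` for `n ≥ 2`. -/
def towerH (n : ℕ) : ℕ :=
  n.primeFactors.attach.sup (fun p => towerH (n.factorization p.1) + 1)
decreasing_by
  exact factorization_lt p.2

/-- Tetration base 2: `tet 0 = 1`, `tet (k+1) = 2 ^ tet k`. -/
def tet : ℕ → ℕ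
  | 0 => 1
  | k + 1 => 2 ^ tet k

open Finset Real
open scoped Nat.Prime

lemma exists_prime_pow_dvd_of_lt_towerH {n k : ℕ} (h : k < towerH n) :
    ∃ p r, p.Prime ∧ r ≠ 0 ∧ k ≤ towerH r ∧ p ^ r ∣ n ∧ n ≠ 0 := by
  unfold towerH at h
  obtain ⟨⟨p, hp⟩, -, hle⟩ := Finset.lt_sup_iff.mp h
  obtain ⟨hprime, hdvd, hn⟩ := Nat.mem_primeFactors.mp hp
  exact ⟨p, n.factorization p, hprime, (hprime.factorization_pos_of_dvd hn hdvd).ne',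
    Nat.lt_succ_iff.mp hle, Nat.ordProj_dvd n p, hn⟩

lemma tet_le_of_le_towerH {k n : ℕ} (hk : k ≤ towerH n) (hn : n ≠ 0) : tet k ≤ n := by
  induction k generalizing n with
  | zero => exact Nat.one_le_iff_ne_zero.mpr hn
  | succ k ih =>
    obtain ⟨p, r, hp, hr, hkr, hdvd, -⟩ := exists_prime_pow_dvd_of_lt_towerH hk
    calc tet (k + 1) = 2 ^ tet k := rfl
      _ ≤ 2 ^ r := Nat.pow_le_pow_right two_pos (ih hkr hr)
      _ ≤ p ^ r := Nat.pow_le_pow_left hp.two_le r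
      _ ≤ n := Nat.le_of_dvd (Nat.pos_of_ne_zero hn) hdvd

lemma tet_pos : ∀ k, 0 < tet k
  | 0 => Nat.one_pos
  | _ + 1 => Nat.two_pow_pos _

lemma two_le_tet {k : ℕ} (hk : k ≠ 0) : 2 ≤ tet k := by
  obtain ⟨k, rfl⟩ := Nat.exists_eq_succ_of_ne_zero hk
  exact Nat.le_self_pow (tet_pos k).ne' 2

def primePowPairs (X k : ℕ) : Finset (ℕ × ℕ) :=
  {q ∈ Icc 1 X ×ˢ Icc 1 X | q.1.Prime ∧ k ≤ towerH q.2 ∧ q.1 ^ q.2 ≤ X}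

lemma mem_primePowPairs {X k p r : ℕ} :
    (p, r) ∈ primePowPairs X k ↔
      (1 ≤ p ∧ p ≤ X) ∧ (1 ≤ r ∧ r ≤ X) ∧ p.Prime ∧ k ≤ towerH r ∧ p ^ r ≤ X := by
  simp [primePowPairs, and_assoc]

lemma card_filter_lt_towerH_le_sum (s : Finset ℕ) {X : ℕ} (hs : ∀ n ∈ s, n ≤ X) (k : ℕ) :
    #{n ∈ s | k < towerH n} ≤ ∑ q ∈ primePowPairs X k, #{n ∈ s | q.1 ^ q.2 ∣ n} := by
  refine (card_le_card fun n hn => ?_).trans card_biUnion_le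
  obtain ⟨hns, hk⟩ := mem_filter.mp hn
  obtain ⟨p, r, hp, hr, hkr, hdvd, hn0⟩ := exists_prime_pow_dvd_of_lt_towerH hk
  have hpow : p ^ r ≤ X := (Nat.le_of_dvd (Nat.pos_of_ne_zero hn0) hdvd).trans (hs n hns)
  have hr_lt : r < p ^ r := Nat.lt_pow_self hp.one_lt
  have hp_le : p ≤ p ^ r := Nat.le_self_pow hr p
  refine mem_biUnion.mpr ⟨(p, r), mem_primePowPairs.mpr ?_, mem_filter.mpr ⟨hns, hdvd⟩⟩
  exact ⟨⟨hp.one_le, by omega⟩, ⟨by omega, by omega⟩, hp, hkr, hpow⟩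

lemma sum_Icc_two_inv_pow_le (M : ℕ) {s : ℕ} (hs : 2 ≤ s) :
    ∑ m ∈ Icc 2 M, ((m : ℝ) ^ s)⁻¹ ≤ 4 / 2 ^ s := by
  have hsq : ∑ m ∈ Icc 2 M, ((m : ℝ) ^ 2)⁻¹ ≤ 1 := by
    have hIoo : Ioo 1 (M + 1) = Icc 2 M := by ext; simp only [mem_Ioo, mem_Icc]; omega
    have := sum_Ioo_inv_sq_le (α := ℝ) 1 (M + 1)
    rw [hIoo] at this
    norm_num at this
    exact this
  have hterm : ∀ m ∈ Icc 2 M, ((m : ℝ) ^ s)⁻¹ ≤ 4 / 2 ^ s * ((m : ℝ) ^ 2)⁻¹ := by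
    intro m hm
    have hm2 : (2 : ℝ) ≤ m := by exact_mod_cast (mem_Icc.mp hm).1
    have hsplit : (m : ℝ) ^ s = m ^ (s - 2) * m ^ 2 := by rw [← pow_add, Nat.sub_add_cancel hs]
    have h2s : (2 : ℝ) ^ s = 2 ^ (s - 2) * 4 := by
      rw [show (4 : ℝ) = 2 ^ 2 by norm_num, ← pow_add, Nat.sub_add_cancel hs]
    rw [hsplit, h2s, mul_inv, show (4 : ℝ) / (2 ^ (s - 2) * 4) = (2 ^ (s - 2))⁻¹ by field_simp]
    gcongr
  calc ∑ m ∈ Icc 2 M, ((m : ℝ) ^ s)⁻¹ ≤ ∑ m ∈ Icc 2 M, 4 / 2 ^ s * ((m : ℝ) ^ 2)⁻¹ :=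
        sum_le_sum hterm
    _ = 4 / 2 ^ s * ∑ m ∈ Icc 2 M, ((m : ℝ) ^ 2)⁻¹ := (mul_sum ..).symm
    _ ≤ 4 / 2 ^ s * 1 := by gcongr
    _ = 4 / 2 ^ s := mul_one _

lemma sum_Ico_inv_two_pow_le (a b : ℕ) : ∑ s ∈ Ico a b, ((2 : ℝ) ^ s)⁻¹ ≤ 2 / 2 ^ a := by
  rw [sum_Ico_eq_sum_range]
  calc ∑ i ∈ range (b - a), ((2 : ℝ) ^ (a + i))⁻¹
        = (2 ^ a)⁻¹ * ∑ i ∈ range (b - a), (1 / 2 : ℝ) ^ i := by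
          rw [mul_sum]; congr! 1 with i; rw [pow_add, mul_inv, one_div, inv_pow]
    _ ≤ (2 ^ a)⁻¹ * 2 := by gcongr; exact sum_geometric_two_le _
    _ = 2 / 2 ^ a := by ring

lemma sum_primePowPairs_inv_le (X : ℕ) {k : ℕ} (hk : k ≠ 0) :
    ∑ q ∈ primePowPairs X k, ((q.1 : ℝ) ^ q.2)⁻¹ ≤ 8 / 2 ^ tet k := by
  have hsub : primePowPairs X k ⊆ Icc 2 X ×ˢ Ico (tet k) (X + 1) := by
    rintro ⟨p, r⟩ hq
    obtain ⟨⟨-, hpX⟩, ⟨hr, hrX⟩, hp, hkr, -⟩ := mem_primePowPairs.mp hq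
    have := tet_le_of_le_towerH hkr (by omega)
    simp only [mem_product, mem_Icc, mem_Ico]
    exact ⟨⟨hp.two_le, hpX⟩, this, by omega⟩
  calc ∑ q ∈ primePowPairs X k, ((q.1 : ℝ) ^ q.2)⁻¹
        ≤ ∑ q ∈ Icc 2 X ×ˢ Ico (tet k) (X + 1), ((q.1 : ℝ) ^ q.2)⁻¹ :=
          sum_le_sum_of_subset_of_nonneg hsub fun _ _ _ => by positivity
    _ = ∑ s ∈ Ico (tet k) (X + 1), ∑ m ∈ Icc 2 X, ((m : ℝ) ^ s)⁻¹ := sum_product_right ..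
    _ ≤ ∑ s ∈ Ico (tet k) (X + 1), 4 * ((2 : ℝ) ^ s)⁻¹ := by
          refine sum_le_sum fun s hs => ?_
          rw [← div_eq_mul_inv]
          exact sum_Icc_two_inv_pow_le X ((two_le_tet hk).trans (mem_Ico.mp hs).1)
    _ ≤ 4 * (2 / 2 ^ tet k) := by rw [← mul_sum]; gcongr; exact sum_Ico_inv_two_pow_le _ _
    _ = 8 / 2 ^ tet k := by ring

lemma card_filter_dvd_Icc_le (R m : ℕ) : (#{n ∈ Icc 1 R | m ∣ n} : ℝ) ≤ R / m := by
  rw [← zero_add 1, Finset.Icc_add_one_left_eq_Ioc, Nat.Ioc_filter_dvd_card_eq_div]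
  exact Nat.cast_div_le

lemma card_filter_dvd_Ioc_le (x y m : ℕ) : (#{n ∈ Ioc x (x + y) | m ∣ n} : ℝ) ≤ y / m + 1 := by
  have hunion : {n ∈ Ioc 0 (x + y) | m ∣ n} = {n ∈ Ioc 0 x | m ∣ n} ∪ {n ∈ Ioc x (x + y) | m ∣ n} := by
    rw [← filter_union, Ioc_union_Ioc_eq_Ioc (Nat.zero_le x) (Nat.le_add_right x y)]
  have hdisj : Disjoint {n ∈ Ioc 0 x | m ∣ n} {n ∈ Ioc x (x + y) | m ∣ n} :=
    disjoint_filter_filter (Ioc_disjoint_Ioc_of_le le_rfl)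
  have hcard : (x + y) / m = x / m + #{n ∈ Ioc x (x + y) | m ∣ n} := by
    rw [← Nat.Ioc_filter_dvd_card_eq_div, hunion, card_union_of_disjoint hdisj,
      Nat.Ioc_filter_dvd_card_eq_div]
  have hle : #{n ∈ Ioc x (x + y) | m ∣ n} ≤ y / m + 1 := by
    have := Nat.add_div_le_div_add_div_add_one x y m
    omega
  calc (#{n ∈ Ioc x (x + y) | m ∣ n} : ℝ) ≤ ((y / m : ℕ) : ℝ) + 1 := by exact_mod_cast hle
    _ ≤ y / m + 1 := by gcongr; exact Nat.cast_div_le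

lemma card_filter_le_towerH_Icc_le (R k : ℕ) :
    (#{n ∈ Icc 1 R | k ≤ towerH n} : ℝ) ≤ 8 * R / tet k := by
  have hRcard : (#{n ∈ Icc 1 R | k ≤ towerH n} : ℝ) ≤ R := by
    exact_mod_cast (card_filter_le _ _).trans (by simp)
  rcases k with _ | k
  · simp only [tet, Nat.cast_one, div_one]; linarith [(R.cast_nonneg : (0 : ℝ) ≤ R)]
  rcases Nat.eq_zero_or_pos k with rfl | hk
  · norm_num [tet]; linarith [(R.cast_nonneg : (0 : ℝ) ≤ R)]
  have hcover := card_filter_lt_towerH_le_sum (Icc 1 R) (fun n hn => (mem_Icc.mp hn).2) k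
  calc (#{n ∈ Icc 1 R | k + 1 ≤ towerH n} : ℝ)
        ≤ ∑ q ∈ primePowPairs R k, (#{n ∈ Icc 1 R | q.1 ^ q.2 ∣ n} : ℝ) := by
          exact_mod_cast hcover
    _ ≤ ∑ q ∈ primePowPairs R k, R * ((q.1 : ℝ) ^ q.2)⁻¹ := by
          refine sum_le_sum fun q _ => ?_
          rw [← div_eq_mul_inv]
          exact_mod_cast card_filter_dvd_Icc_le R (q.1 ^ q.2)
    _ ≤ R * (8 / 2 ^ tet k) := by
          rw [← mul_sum]; gcongr; exact sum_primePowPairs_inv_le R hk.ne'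
    _ = 8 * R / tet (k + 1) := by rw [tet]; push_cast; ring

lemma card_filter_lt_towerH_Ioc_le (x y : ℕ) {k : ℕ} (hk : k ≠ 0) :
    (#{n ∈ Ioc x (x + y) | k < towerH n} : ℝ) ≤
      8 * y / tet (k + 1) + #(primePowPairs (x + y) k) := by
  have hcover := card_filter_lt_towerH_le_sum (Ioc x (x + y)) (fun n hn => (mem_Ioc.mp hn).2) k
  calc (#{n ∈ Ioc x (x + y) | k < towerH n} : ℝ)
        ≤ ∑ q ∈ primePowPairs (x + y) k, (#{n ∈ Ioc x (x + y) | q.1 ^ q.2 ∣ n} : ℝ) := by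
          exact_mod_cast hcover
    _ ≤ ∑ q ∈ primePowPairs (x + y) k, (y * ((q.1 : ℝ) ^ q.2)⁻¹ + 1) := by
          refine sum_le_sum fun q _ => ?_
          rw [← div_eq_mul_inv]
          exact_mod_cast card_filter_dvd_Ioc_le x y (q.1 ^ q.2)
    _ = y * ∑ q ∈ primePowPairs (x + y) k, ((q.1 : ℝ) ^ q.2)⁻¹ + #(primePowPairs (x + y) k) := by
          rw [sum_add_distrib, mul_sum, sum_const, nsmul_one]
    _ ≤ y * (8 / 2 ^ tet k) + #(primePowPairs (x + y) k) := by
          gcongr; exact sum_primePowPairs_inv_le _ hk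
    _ = 8 * y / tet (k + 1) + #(primePowPairs (x + y) k) := by rw [tet]; push_cast; ring

lemma sqrt_mul_log_le {z : ℝ} (hz : 0 ≤ z) : √z * log z ≤ 2 * z := by
  have hlog : log z ≤ 2 * √z := by
    have := log_le_rpow_div hz (ε := 1 / 2) (by norm_num)
    rwa [← sqrt_eq_rpow, div_div_eq_mul_div, div_one, mul_comm] at this
  calc √z * log z ≤ √z * (2 * √z) := by gcongr
    _ = 2 * z := by rw [mul_left_comm, mul_self_sqrt hz]

lemma log_sq_le_sixteen_mul_sqrt {a : ℝ} (ha : 1 ≤ a) : log a ^ 2 ≤ 16 * √a := by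
  have hlog : log a ≤ 4 * a ^ (1 / 4 : ℝ) := by
    simpa [div_eq_mul_inv, mul_comm] using log_le_rpow_div (by linarith) (ε := 1 / 4) (by norm_num)
  have hsq : (a ^ (1 / 4 : ℝ)) ^ 2 = √a := by
    rw [sqrt_eq_rpow, ← rpow_natCast, ← rpow_mul (by linarith)]; norm_num
  nlinarith [log_nonneg ha]

lemma primeCounting_floor_le {z : ℝ} (hz : 1 < z) : (π ⌊z⌋₊ : ℝ) ≤ 5 * z / log z := by
  have hlog : 0 < log z := log_pos hz
  have hsqrt : √z ≤ 2 * z / log z := by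
    rw [le_div_iff₀ hlog]; exact sqrt_mul_log_le (by linarith)
  have hlog4 : log 4 < 3 / 2 := by
    rw [show (4 : ℝ) = 2 ^ 2 by norm_num, log_pow]; linarith [log_two_lt_d9]
  calc (π ⌊z⌋₊ : ℝ) ≤ log 4 * z / log √z + √z := Chebyshev.pi_le_log4_mul_div hz
    _ ≤ 3 / 2 * z / (log z / 2) + 2 * z / log z := by
          rw [log_sqrt (by linarith)]; gcongr
    _ = 5 * z / log z := by field_simp; ring

lemma pow_le_of_mem_primePowPairs {X k p r j : ℕ} (hq : (p, r) ∈ primePowPairs X k) {A : ℝ}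
    (hA : 0 ≤ A) (hXA : (X : ℝ) ≤ A ^ tet k) (hj : j * tet k ≤ r) : (p : ℝ) ^ j ≤ A := by
  obtain ⟨⟨hp, -⟩, -, -, -, hpow⟩ := mem_primePowPairs.mp hq
  refine (pow_le_pow_iff_left₀ (by positivity) hA (tet_pos k).ne').mp ?_
  calc ((p : ℝ) ^ j) ^ tet k = p ^ (j * tet k) := (pow_mul _ _ _).symm
    _ ≤ p ^ r := pow_le_pow_right₀ (by exact_mod_cast hp) hj
    _ ≤ X := by exact_mod_cast hpow
    _ ≤ A ^ tet k := hXA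

section PairCount

variable {X k : ℕ} {A : ℝ}

lemma card_filter_primePowPairs_lt_le (hA : 1 < A) (hXA : (X : ℝ) ≤ A ^ tet k) :
    (#{q ∈ primePowPairs X k | q.2 < 2 * tet k} : ℝ) ≤ 80 * A / log A := by
  have hsub : {q ∈ primePowPairs X k | q.2 < 2 * tet k} ⊆
      Nat.primesLE ⌊A⌋₊ ×ˢ {r ∈ Icc 1 (2 * tet k) | k ≤ towerH r} := by
    rintro ⟨p, r⟩ hq
    obtain ⟨hq, hr⟩ := mem_filter.mp hq
    obtain ⟨-, ⟨hr1, -⟩, hp, hkr, -⟩ := mem_primePowPairs.mp hq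
    have hpA : (p : ℝ) ≤ A := by
      simpa using pow_le_of_mem_primePowPairs (j := 1) hq (by linarith) hXA
        (by simpa using tet_le_of_le_towerH hkr (by omega))
    simp only [mem_product, Nat.mem_primesLE, mem_filter, mem_Icc]
    exact ⟨⟨Nat.le_floor hpA, hp⟩, ⟨hr1, hr.le⟩, hkr⟩
  have hexp : (#{r ∈ Icc 1 (2 * tet k) | k ≤ towerH r} : ℝ) ≤ 16 := by
    have := card_filter_le_towerH_Icc_le (2 * tet k) k
    have hT : (0 : ℝ) < tet k := by exact_mod_cast tet_pos k
    rwa [Nat.cast_mul, Nat.cast_two, show 8 * (2 * (tet k : ℝ)) / tet k = 16 by field_simp; ring]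
      at this
  calc (#{q ∈ primePowPairs X k | q.2 < 2 * tet k} : ℝ)
        ≤ π ⌊A⌋₊ * #{r ∈ Icc 1 (2 * tet k) | k ≤ towerH r} := by
          rw [← Nat.primesLE_card_eq_primeCounting, ← Nat.cast_mul, ← card_product]
          exact_mod_cast card_le_card hsub
    _ ≤ 5 * A / log A * 16 := by
          gcongr
          · exact div_nonneg (by linarith) (log_pos hA).le
          · exact primeCounting_floor_le hA
    _ = 80 * A / log A := by ring

lemma card_filter_primePowPairs_not_lt_le (hA : 1 < A) (hXA : (X : ℝ) ≤ A ^ tet k) :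
    (#{q ∈ primePowPairs X k | ¬q.2 < 2 * tet k} : ℝ) ≤ 200 * A / log A := by
  have hlogA : 0 < log A := log_pos hA
  set R := ⌊tet k * log A / log 2⌋₊
  have hsub : {q ∈ primePowPairs X k | ¬q.2 < 2 * tet k} ⊆
      Icc 1 ⌊√A⌋₊ ×ˢ {r ∈ Icc 1 R | k ≤ towerH r} := by
    rintro ⟨p, r⟩ hq
    obtain ⟨hq, hr⟩ := mem_filter.mp hq
    obtain ⟨⟨hp1, -⟩, ⟨hr1, -⟩, hp, hkr, hpow⟩ := mem_primePowPairs.mp hq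
    have hpA : (p : ℝ) ^ 2 ≤ A := pow_le_of_mem_primePowPairs hq (by linarith) hXA (by omega)
    have hrA : (2 : ℝ) ^ r ≤ A ^ tet k := calc
      (2 : ℝ) ^ r ≤ p ^ r := by gcongr; exact_mod_cast hp.two_le
      _ ≤ X := by exact_mod_cast hpow
      _ ≤ A ^ tet k := hXA
    have hrlog : r * log 2 ≤ tet k * log A := by
      simpa only [log_pow] using log_le_log (by positivity) hrA
    simp only [mem_product, mem_filter, mem_Icc]
    refine ⟨⟨hp1, Nat.le_floor (le_sqrt_of_sq_le hpA)⟩, ⟨hr1, Nat.le_floor ?_⟩, hkr⟩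
    rwa [le_div_iff₀ (log_pos one_lt_two)]
  have hexp : (#{r ∈ Icc 1 R | k ≤ towerH r} : ℝ) ≤ 8 * log A / log 2 := by
    have hT : (0 : ℝ) < tet k := by exact_mod_cast tet_pos k
    calc (#{r ∈ Icc 1 R | k ≤ towerH r} : ℝ) ≤ 8 * R / tet k := card_filter_le_towerH_Icc_le R k
      _ ≤ 8 * (tet k * log A / log 2) / tet k := by
            gcongr; exact Nat.floor_le (by positivity [log_pos one_lt_two])
      _ = 8 * log A / log 2 := by field_simp
  have hsqrt : (#(Icc 1 ⌊√A⌋₊) : ℝ) ≤ √A := by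
    simpa using Nat.floor_le (sqrt_nonneg A)
  have hsqA : √A * √A = A := mul_self_sqrt (by linarith)
  have hlogsq := log_sq_le_sixteen_mul_sqrt hA.le
  have hlog2 := log_two_gt_d9
  calc (#{q ∈ primePowPairs X k | ¬q.2 < 2 * tet k} : ℝ)
        ≤ #(Icc 1 ⌊√A⌋₊) * #{r ∈ Icc 1 R | k ≤ towerH r} := by
          rw [← Nat.cast_mul, ← card_product]
          exact_mod_cast card_le_card hsub
    _ ≤ √A * (8 * log A / log 2) := by gcongr
    _ ≤ 200 * A / log A := by
          rw [mul_div_assoc', div_le_div_iff₀ (by positivity) hlogA]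
          nlinarith [sqrt_nonneg A, one_le_sqrt.mpr hA.le]

lemma card_primePowPairs_le (hA : 1 < A) (hXA : (X : ℝ) ≤ A ^ tet k) :
    (#(primePowPairs X k) : ℝ) ≤ 280 * A / log A := by
  rw [← card_filter_add_card_filter_not (fun q : ℕ × ℕ => q.2 < 2 * tet k), Nat.cast_add]
  calc _ ≤ 80 * A / log A + 200 * A / log A :=
        add_le_add (card_filter_primePowPairs_lt_le hA hXA)
          (card_filter_primePowPairs_not_lt_le hA hXA)
    _ = 280 * A / log A := by ring

end PairCount

/-- For `l ≥ 1` and `x, y ≥ 2`, the number of `x < n ≤ x + y` with `H(n) ≥ l` is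
`O(y / 2↑↑l + 2↑↑(l-1) (x+y)^{1/2↑↑(l-1)} / log (x+y))`. -/
theorem stmt_13 : ∃ C : ℝ, 0 < C ∧ ∀ l x y : ℕ, 1 ≤ l → 2 ≤ x → 2 ≤ y →
    (((Finset.Ioc x (x + y)).filter (fun n => l ≤ towerH n)).card : ℝ) ≤
      C * ((y : ℝ) / tet l +
        (tet (l - 1) : ℝ) * ((x : ℝ) + y) ^ ((1 : ℝ) / tet (l - 1)) /
          Real.log ((x : ℝ) + y)) := by
  refine ⟨280, by norm_num, fun l x y hl hx hy => ?_⟩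
  obtain ⟨k, rfl⟩ := Nat.exists_eq_add_of_le' hl
  rw [Nat.add_sub_cancel]
  set X : ℝ := x + y
  set A := X ^ ((1 : ℝ) / tet k)
  have hX : 1 < X := by simp only [X]; norm_cast; omega
  have hT : (0 : ℝ) < tet k := by exact_mod_cast tet_pos k
  have hsecond : 0 ≤ tet k * A / log X := by positivity [log_pos hX]
  rcases Nat.eq_zero_or_pos k with rfl | hk
  · have hcard : (#{n ∈ Ioc x (x + y) | 0 + 1 ≤ towerH n} : ℝ) ≤ y := by
      exact_mod_cast (card_filter_le _ _).trans (by simp)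
    norm_num [tet] at hsecond ⊢
    linarith
  have hA : 1 < A := one_lt_rpow hX (by positivity)
  have hAT : A ^ tet k = X := by
    simp only [A]; rw [one_div, rpow_inv_natCast_pow (by linarith) (tet_pos k).ne']
  have hlogA : log A = log X / tet k := by rw [log_rpow (by linarith)]; ring
  have hpairs := card_primePowPairs_le (X := x + y) (k := k) hA (by rw [hAT]; push_cast; rfl)
  rw [hlogA, div_div_eq_mul_div] at hpairs
  have hfirst : (0 : ℝ) ≤ y / tet (k + 1) := by positivity
  calc _ ≤ 8 * (y : ℝ) / tet (k + 1) + #(primePowPairs (x + y) k) :=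
        card_filter_lt_towerH_Ioc_le x y hk.ne'
    _ ≤ 8 * (y / tet (k + 1)) + 280 * (tet k * A / log X) := by
        rw [mul_div_assoc]; gcongr; exact hpairs.trans_eq (by ring)
    _ ≤ 280 * (y / tet (k + 1) + tet k * A / log X) := by linarith
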